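/- Let n, d ≥ 1 and let A ∈ ℝ^{n×d} have rows a_1, …, a_n ∈ ℝ^d which span ℝ^d. Then for every t ∈ ℝ^n, the n×n matrix H(t) is a graph Laplacian: H(t)_{ij} ≤ 0 for all i ≠ j, H(t)_{ii} ≥ 0 for all i, and Σ_{j=1}^n H(t)_{ij} = 0 for every i ∈ [n]. -/

import Mathlib

open Matrix

/-- `Z(t) := ∑ i, exp (t i) • a_i a_iᵀ`, where `a_i` are the rows of `A`. -/
noncomputable def Zmat {n d : ℕ} (A : Matrix (Fin n) (Fin d) ℝ) (t : Fin n → ℝ) :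
    Matrix (Fin d) (Fin d) ℝ :=
  ∑ i, Real.exp (t i) • vecMulVec (A i) (A i)

/-- The Hessian of Barthe's objective:
`H(t)_{ij} = exp(t_i)·a_iᵀZ(t)⁻¹a_i·1[i=j] − exp(t_i+t_j)·(a_iᵀZ(t)⁻¹a_j)²`. -/
noncomputable def bartheHessian {n d : ℕ} (A : Matrix (Fin n) (Fin d) ℝ) (t : Fin n → ℝ) :
    Matrix (Fin n) (Fin n) ℝ :=
  Matrix.of fun i j =>
    (if i = j then Real.exp (t i) * (A i ⬝ᵥ ((Zmat A t)⁻¹ *ᵥ A i)) else 0)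
      - Real.exp (t i + t j) * (A i ⬝ᵥ ((Zmat A t)⁻¹ *ᵥ A j)) ^ 2

lemma Zmat_mulVec {n d : ℕ} (A : Matrix (Fin n) (Fin d) ℝ) (t : Fin n → ℝ) (x : Fin d → ℝ) :
    Zmat A t *ᵥ x = ∑ i, (Real.exp (t i) * (A i ⬝ᵥ x)) • A i := by
  funext k
  simp only [Zmat, Matrix.mulVec, dotProduct, Matrix.sum_apply, Matrix.smul_apply,
    vecMulVec_apply, smul_eq_mul, Finset.sum_apply, Pi.smul_apply]
  simp only [Finset.sum_mul, Finset.mul_sum]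
  rw [Finset.sum_comm]
  exact Finset.sum_congr rfl fun i _ => Finset.sum_congr rfl fun j _ => by ring

lemma dp_sum {d m : ℕ} (v : Fin d → ℝ) (f : Fin m → Fin d → ℝ) :
    v ⬝ᵥ (∑ i, f i) = ∑ i, v ⬝ᵥ f i := by
  simp only [dotProduct, Finset.sum_apply, Finset.mul_sum]
  exact Finset.sum_comm

lemma quadform_Zmat {n d : ℕ} (A : Matrix (Fin n) (Fin d) ℝ) (t : Fin n → ℝ) (x : Fin d → ℝ) :
    x ⬝ᵥ (Zmat A t *ᵥ x) = ∑ i, Real.exp (t i) * (A i ⬝ᵥ x) ^ 2 := by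
  rw [Zmat_mulVec, dp_sum]
  refine Finset.sum_congr rfl fun i _ => ?_
  rw [dotProduct_smul, smul_eq_mul, dotProduct_comm, sq]
  ring

lemma Zmat_posDef {n d : ℕ} (A : Matrix (Fin n) (Fin d) ℝ)
    (hspan : Submodule.span ℝ (Set.range fun i => A i) = ⊤) (t : Fin n → ℝ) :
    (Zmat A t).PosDef := by
  refine posDef_iff_dotProduct_mulVec.mpr ⟨?_, ?_⟩
  · -- Hermitian
    rw [Matrix.IsHermitian, conjTranspose_eq_transpose_of_trivial]
    ext i j
    simp only [Zmat, transpose_apply, Matrix.sum_apply, Matrix.smul_apply, vecMulVec_apply,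
      smul_eq_mul]
    exact Finset.sum_congr rfl fun k _ => by ring
  · intro x hx
    have hx' : ∃ i, A i ⬝ᵥ x ≠ 0 := by
      by_contra h
      push_neg at h
      have hall : ∀ v ∈ Submodule.span ℝ (Set.range fun i => A i), v ⬝ᵥ x = 0 := by
        intro v hv
        induction hv using Submodule.span_induction with
        | mem v hv => obtain ⟨i, rfl⟩ := hv; exact h i
        | zero => simp
        | add a b _ _ ha hb => simp [add_dotProduct, ha, hb]
        | smul c a _ ha => simp [smul_dotProduct, ha]
      have h0 := hall x (hspan ▸ Submodule.mem_top)
      rw [dotProduct_self_eq_zero] at h0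
      exact hx h0
    obtain ⟨i0, hi0⟩ := hx'
    have : (0:ℝ) < x ⬝ᵥ Zmat A t *ᵥ x := by
      rw [quadform_Zmat]
      refine Finset.sum_pos' (fun i _ => mul_nonneg (Real.exp_pos _).le (sq_nonneg _)) ?_
      exact ⟨i0, Finset.mem_univ _, mul_pos (Real.exp_pos _)
        ((sq_nonneg _).lt_of_ne (Ne.symm (pow_ne_zero 2 hi0)))⟩
    simpa using this

/-- the Hessian of Barthe's objective is a graph Laplacian:
nonpositive off-diagonal entries, nonnegative diagonal entries, and zero row sums. -/
theorem stmt_7 (n d : ℕ) (hn : 1 ≤ n) (hd : 1 ≤ d)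
    (A : Matrix (Fin n) (Fin d) ℝ)
    (hspan : Submodule.span ℝ (Set.range fun i => A i) = ⊤) :
    ∀ t : Fin n → ℝ,
      (∀ i j, i ≠ j → bartheHessian A t i j ≤ 0) ∧
      (∀ i, 0 ≤ bartheHessian A t i i) ∧
      (∀ i, ∑ j, bartheHessian A t i j = 0) := by
  intro t
  have hPD : (Zmat A t).PosDef := Zmat_posDef A hspan t
  have hdet : IsUnit (Zmat A t).det := hPD.det_pos.ne'.isUnit
  have htrans : ((Zmat A t)⁻¹)ᵀ = (Zmat A t)⁻¹ := by
    have h := hPD.isHermitian.inv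
    rwa [Matrix.IsHermitian, conjTranspose_eq_transpose_of_trivial] at h
  -- off-diagonal nonpositive
  have hoff : ∀ i j, i ≠ j → bartheHessian A t i j ≤ 0 := by
    intro i j hij
    simp only [bartheHessian, Matrix.of_apply, if_neg hij, zero_sub, neg_nonpos]
    exact mul_nonneg (Real.exp_pos _).le (sq_nonneg _)
  -- zero row sums
  have key : ∀ i, ∑ j, bartheHessian A t i j = 0 := by
    intro i
    set w := (Zmat A t)⁻¹ *ᵥ A i with hw
    have hsymm : ∀ j, A i ⬝ᵥ ((Zmat A t)⁻¹ *ᵥ A j) = A j ⬝ᵥ w := by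
      intro j
      rw [dotProduct_mulVec, ← mulVec_transpose, htrans, ← hw, dotProduct_comm]
    have hZw : Zmat A t *ᵥ w = A i := by
      rw [hw, mulVec_mulVec, Matrix.mul_nonsing_inv _ hdet, one_mulVec]
    have hsum : ∑ j, Real.exp (t j) * (A j ⬝ᵥ w) ^ 2 = A i ⬝ᵥ w := by
      have h1 := quadform_Zmat A t w
      rw [hZw, dotProduct_comm] at h1
      exact h1.symm
    have e1 : ∑ j, bartheHessian A t i j
        = (∑ j, (if i = j then Real.exp (t i) * (A i ⬝ᵥ ((Zmat A t)⁻¹ *ᵥ A i)) else 0))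
          - ∑ j, Real.exp (t i + t j) * (A i ⬝ᵥ ((Zmat A t)⁻¹ *ᵥ A j)) ^ 2 := by
      rw [← Finset.sum_sub_distrib]; rfl
    rw [e1, Finset.sum_ite_eq Finset.univ i, if_pos (Finset.mem_univ i)]
    have e2 : ∑ j, Real.exp (t i + t j) * (A i ⬝ᵥ ((Zmat A t)⁻¹ *ᵥ A j)) ^ 2
        = Real.exp (t i) * ∑ j, Real.exp (t j) * (A j ⬝ᵥ w) ^ 2 := by
      rw [Finset.mul_sum]
      refine Finset.sum_congr rfl fun j _ => ?_
      rw [Real.exp_add, hsymm j]; ring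
    rw [e2, hsum, hsymm i]
    ring
  refine ⟨hoff, fun i => ?_, key⟩
  have h0 := key i
  rw [← Finset.add_sum_erase _ _ (Finset.mem_univ i)] at h0
  have hle : ∑ j ∈ Finset.univ.erase i, bartheHessian A t i j ≤ 0 :=
    Finset.sum_nonpos fun j hj => hoff i j (Finset.ne_of_mem_erase hj).symm
  linarith
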